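/- arXiv:2408.05605 — 3 statements merged into one kernel-verified Lean document; each statement's English description precedes it below -/
import Mathlib

section
/- For every infinite cardinal μ there exists a simple graph G with vertex set of cardinality μ such that: (1) G has the extension property (is a random graph): for any two disjoint finite sets X, Y of vertices there is a vertex v ∉ X ∪ Y adjacent to every vertex of X and to no vertex of Y; (2) the chromatic number of G equals μ, i.e. G has a proper coloring with colors in a set of cardinality μ but no proper coloring with colors in a set of cardinality strictly less than μ; and (3) G contains no clique of cardinality ℵ₁. -/
/-!
Start from the nesting graph on pairs of ordinals below `μ`: the pair `(a, b)` stands for an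
interval, and `(a, b)`, `(a', b')` are adjacent when `a < a' < b' < b` or vice versa. A clique is
an antichain for the product order, hence finite, since a product of two well-orders is
well-quasi-ordered (Dickson). For a regular `κ ≤ μ`, the copy on `κ` has no colouring `c` with
fewer than `κ` colours: for each `p`, pick one interval starting after `p` of each colour such
intervals carry, and choose `b p` above all of them (regularity). Then no interval starting after
`p` has the colour of `(p, b p)`, so `p ↦ c (p, b p)` is injective.

Then a witness vertex is added freely for every pair of finite sets `(X, Y)`, joined exactly to
`X`, and this is iterated `ω` times (a `W`-type). This gives the extension property without
changing the cardinality, and the base graph stays an induced subgraph. Two adjacent witnesses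
have different depths (one is a child of the other), so a clique contains countably many of them.
-/

open Cardinal Set

universe u

theorem Cardinal.exists_isRegular_between {c μ : Cardinal} (hμ : ℵ₀ ≤ μ) (hc : c < μ) :
    ∃ κ : Cardinal, κ.IsRegular ∧ c < κ ∧ κ ≤ μ := by
  rcases lt_or_ge c ℵ₀ with h | h
  · exact ⟨ℵ₀, isRegular_aleph0, h, hμ⟩
  · exact ⟨Order.succ c, isRegular_succ h, Order.lt_succ c, Order.succ_le_of_lt hc⟩

namespace SimpleGraph

section
variable {α β : Type*} [LinearOrder α] [LinearOrder β]

variable (α) in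
def nestingGraph : SimpleGraph (α × α) where
  Adj x y := (x.1 < y.1 ∧ y.1 < y.2 ∧ y.2 < x.2) ∨ (y.1 < x.1 ∧ x.1 < x.2 ∧ x.2 < y.2)
  symm := ⟨fun _ _ h => h.symm⟩
  loopless := ⟨fun _ h => by rcases h with ⟨h, -⟩ | ⟨h, -⟩ <;> exact lt_irrefl _ h⟩

theorem nestingGraph_adj {x y : α × α} : (nestingGraph α).Adj x y ↔
    (x.1 < y.1 ∧ y.1 < y.2 ∧ y.2 < x.2) ∨ (y.1 < x.1 ∧ x.1 < x.2 ∧ x.2 < y.2) :=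
  Iff.rfl

def nestingGraphHom (f : α ↪o β) : nestingGraph α →g nestingGraph β where
  toFun := Prod.map f f
  map_rel' := by
    rintro x y (⟨h₁, h₂, h₃⟩ | ⟨h₁, h₂, h₃⟩ : (nestingGraph α).Adj x y)
    · exact Or.inl ⟨f.strictMono h₁, f.strictMono h₂, f.strictMono h₃⟩
    · exact Or.inr ⟨f.strictMono h₁, f.strictMono h₂, f.strictMono h₃⟩

theorem IsClique.isAntichain_of_nestingGraph {s : Set (α × α)} (hs : (nestingGraph α).IsClique s) :
    IsAntichain (· ≤ ·) s := by
  intro x hx y hy hne hle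
  rw [Prod.le_def] at hle
  rcases nestingGraph_adj.1 (hs hx hy hne) with h | h <;> order

theorem IsClique.finite_of_nestingGraph [WellFoundedLT α] {s : Set (α × α)}
    (hs : (nestingGraph α).IsClique s) : s.Finite :=
  WellQuasiOrderedLE.finite_of_isAntichain hs.isAntichain_of_nestingGraph

end

theorem cof_le_of_coloring_nestingGraph {α C : Type u} [LinearOrder α] (hα : ℵ₀ ≤ Order.cof α)
    (c : (nestingGraph α).Coloring C) : Order.cof α ≤ #C := by
  by_contra! hC
  have key : ∀ p : α, ∃ b, p < b ∧ ∀ q : α × α, p < q.1 → q.1 < q.2 → c q ≠ c (p, b) := by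
    intro p
    set K := {q : α × α | p < q.1 ∧ q.1 < q.2}
    choose r hrK hrc using fun i : c '' K => i.2
    have hsmall : #(insert p (range fun i => (r i).2) : Set α) < Order.cof α :=
      calc _ ≤ #(range fun i => (r i).2) + 1 := mk_insert_le
        _ ≤ #C + 1 := add_le_add_left (mk_range_le.trans (mk_set_le _)) 1
        _ < Order.cof α := add_lt_of_lt hα hC (one_lt_aleph0.trans_le hα)
    obtain ⟨b, hb⟩ := not_isCofinal_iff.1 fun h => (Order.cof_le h).not_gt hsmall
    refine ⟨b, hb p (mem_insert _ _), fun q hp hq hcq => ?_⟩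
    let i : c '' K := ⟨c q, q, ⟨hp, hq⟩, rfl⟩
    have hrb : (r i).2 < b := hb _ (mem_insert_of_mem _ ⟨i, rfl⟩)
    exact c.valid (Or.inl ⟨(hrK i).1, (hrK i).2, hrb⟩) ((hrc i).trans hcq).symm
  choose b hpb hb using key
  have hinj : Function.Injective fun p => c (p, b p) :=
    .of_lt_imp_ne fun p p' hlt => (hb p (p', b p') hlt (hpb p')).symm
  exact hC.not_ge ((Order.cof_le_cardinalMk α).trans (mk_le_of_injective hinj))

theorem isEmpty_coloring_nestingGraph {μ : Cardinal.{u}} (hμ : ℵ₀ ≤ μ) {C : Type u} (hC : #C < μ) :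
    IsEmpty ((nestingGraph μ.ord.ToType).Coloring C) := by
  refine ⟨fun c => ?_⟩
  obtain ⟨κ, hκ, hCκ, hκμ⟩ := exists_isRegular_between hμ hC
  have hcof : Order.cof κ.ord.ToType = κ := by rw [Ordinal.cof_toType, hκ.cof_ord]
  obtain ⟨f⟩ : Nonempty (κ.ord.ToType ≤i μ.ord.ToType) := by
    rw [← Ordinal.type_le_iff, Ordinal.type_toType, Ordinal.type_toType, ord_le_ord]
    exact hκμ
  have := cof_le_of_coloring_nestingGraph (hcof.symm ▸ hκ.aleph0_le)
    (c.comap (nestingGraphHom f.toOrderEmbedding))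
  exact (hcof ▸ this).not_gt hCκ

end SimpleGraph

/-- Node labels: `inl b` is the vertex `b` of the base graph, `inr (m, n)` a witness whose first
`m` children are the vertices it is joined to; the other `n` children only make it new. -/
def FreeExt.Arity (B : Type u) : B ⊕ (ℕ × ℕ) → Type
  | .inl _ => PEmpty
  | .inr (m, n) => Fin m ⊕ Fin n

instance (B : Type u) : ∀ a, Fintype (FreeExt.Arity B a)
  | .inl _ => inferInstanceAs (Fintype PEmpty)
  | .inr (m, n) => inferInstanceAs (Fintype (Fin m ⊕ Fin n))

abbrev FreeExt (B : Type u) := WType (FreeExt.Arity B)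

namespace FreeExt

variable {B : Type u}

def base : B ↪ FreeExt B where
  toFun b := ⟨.inl b, PEmpty.elim⟩
  inj' a b h := by cases h; rfl

noncomputable def witness (X Y : Finset (FreeExt B)) : FreeExt B :=
  ⟨.inr (X.card, Y.card), Sum.elim (fun i => X.equivFin.symm i) (fun i => Y.equivFin.symm i)⟩

def joined : FreeExt B → Set (FreeExt B)
  | ⟨.inl _, _⟩ => ∅
  | ⟨.inr (m, _), f⟩ => range fun i : Fin m => f (.inl i)

@[simp] theorem joined_base (b : B) : joined (base b) = ∅ := rfl

@[simp] theorem joined_witness (X Y : Finset (FreeExt B)) : joined (witness X Y) = X := by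
  change range (Subtype.val ∘ X.equivFin.symm) = X
  rw [range_comp, Equiv.range_eq_univ, image_univ, Subtype.range_coe]

theorem depth_lt_of_mem_joined {u v : FreeExt B} (h : u ∈ joined v) : u.depth < v.depth := by
  obtain ⟨_ | ⟨m, n⟩, f⟩ := v
  · exact h.elim
  · obtain ⟨i, rfl⟩ := h
    exact WType.depth_lt_depth_mk _ f (.inl i)

theorem depth_lt_depth_witness_left {X Y : Finset (FreeExt B)} {x : FreeExt B} (hx : x ∈ X) :
    x.depth < (witness X Y).depth :=
  depth_lt_of_mem_joined (by simpa using hx)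

theorem depth_lt_depth_witness_right {X Y : Finset (FreeExt B)} {y : FreeExt B} (hy : y ∈ Y) :
    y.depth < (witness X Y).depth := by
  have h := WType.depth_lt_depth_mk (β := Arity B) (.inr (X.card, Y.card))
    (Sum.elim (fun i => (X.equivFin.symm i : FreeExt B)) fun i => (Y.equivFin.symm i : FreeExt B))
    (Sum.inr (Y.equivFin ⟨y, hy⟩))
  simpa [witness] using h

theorem witness_notMem_range_base (X Y : Finset (FreeExt B)) : witness X Y ∉ range base := by
  rintro ⟨b, hb⟩
  cases hb

theorem cardinalMk_eq (hB : ℵ₀ ≤ #B) : #(FreeExt B) = #B := by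
  refine (WType.cardinalMk_le_max_aleph0_of_finite'.trans ?_).antisymm base.cardinal_le
  simpa using (add_eq_left hB hB).le

end FreeExt

namespace SimpleGraph

open FreeExt

variable {V B : Type*}

def HasExtensionProperty (G : SimpleGraph V) : Prop :=
  ∀ X Y : Finset V, Disjoint X Y →
    ∃ v, v ∉ X ∧ v ∉ Y ∧ (∀ x ∈ X, G.Adj v x) ∧ ∀ y ∈ Y, ¬ G.Adj v y

def freeExt (H : SimpleGraph B) : SimpleGraph (FreeExt B) :=
  H.map base ⊔ fromRel fun u v => u ∈ joined v

variable {H : SimpleGraph B}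

theorem freeExt_adj {u v : FreeExt B} : H.freeExt.Adj u v ↔
    (∃ a b, H.Adj a b ∧ base a = u ∧ base b = v) ∨ (u ≠ v ∧ (u ∈ joined v ∨ v ∈ joined u)) := by
  simp only [freeExt, sup_adj, map_adj, fromRel_adj]

theorem freeExt_adj_base {a b : B} : H.freeExt.Adj (base a) (base b) ↔ H.Adj a b := by
  simp [freeExt_adj]

def toFreeExt (H : SimpleGraph B) : H →g H.freeExt where
  toFun := base
  map_rel' := freeExt_adj_base.2

theorem depth_ne_of_freeExt_adj {u v : FreeExt B} (h : H.freeExt.Adj u v) (hu : u ∉ range base) :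
    u.depth ≠ v.depth := by
  rcases freeExt_adj.1 h with ⟨a, -, -, rfl, -⟩ | ⟨-, huv | hvu⟩
  · exact (hu ⟨a, rfl⟩).elim
  · exact (depth_lt_of_mem_joined huv).ne
  · exact (depth_lt_of_mem_joined hvu).ne'

theorem hasExtensionProperty_freeExt (H : SimpleGraph B) : H.freeExt.HasExtensionProperty := by
  intro X Y hXY
  refine ⟨witness X Y, fun hX => (depth_lt_depth_witness_left hX).false,
    fun hY => (depth_lt_depth_witness_right hY).false, fun x hx => ?_, fun y hy hadj => ?_⟩
  · exact freeExt_adj.2 <| .inr ⟨fun h => (depth_lt_depth_witness_left (h ▸ hx)).false,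
      .inr (by simpa using hx)⟩
  · rcases freeExt_adj.1 hadj with ⟨a, -, -, ha, -⟩ | ⟨-, hwy | hyw⟩
    · exact witness_notMem_range_base X Y ⟨a, ha⟩
    · exact (depth_lt_of_mem_joined hwy).not_gt (depth_lt_depth_witness_right hy)
    · exact Finset.disjoint_left.1 hXY (by simpa using hyw) hy

theorem IsClique.countable_of_freeExt (hH : ∀ s, H.IsClique s → s.Countable)
    {S : Set (FreeExt B)} (hS : H.freeExt.IsClique S) : S.Countable := by
  have hbase : (base ⁻¹' S).Countable :=
    hH _ fun a ha b hb hab => freeExt_adj_base.1 (hS ha hb (base.injective.ne hab))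
  have hrest : (S \ range base).Countable :=
    (mapsTo_univ WType.depth _).countable_of_injOn
      (fun u hu v hv huv => by_contra fun hne => depth_ne_of_freeExt_adj (hS hu.1 hv.1 hne) hu.2 huv)
      countable_univ
  refine ((hbase.image base).union hrest).mono fun u hu => ?_
  by_cases hb : u ∈ range base
  · obtain ⟨a, rfl⟩ := hb
    exact .inl ⟨a, hu, rfl⟩
  · exact .inr ⟨hu, hb⟩

end SimpleGraph

theorem stmt_3 (μ : Cardinal) (hμ : ℵ₀ ≤ μ) :
    ∃ (V : Type) (G : SimpleGraph V), #V = μ ∧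
      (∀ X Y : Finset V, Disjoint X Y →
        ∃ v : V, v ∉ X ∧ v ∉ Y ∧ (∀ x ∈ X, G.Adj v x) ∧ (∀ y ∈ Y, ¬ G.Adj v y)) ∧
      (∃ (C : Type) (c : V → C), #C = μ ∧ ∀ x y : V, G.Adj x y → c x ≠ c y) ∧
      (¬ ∃ (C : Type) (c : V → C), #C < μ ∧ ∀ x y : V, G.Adj x y → c x ≠ c y) ∧
      (¬ ∃ S : Set V, S.Pairwise G.Adj ∧ #S = aleph 1) := by
  set H := SimpleGraph.nestingGraph μ.ord.ToType
  have hcard : #(FreeExt (μ.ord.ToType × μ.ord.ToType)) = μ := by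
    rw [FreeExt.cardinalMk_eq] <;> simp [mul_eq_self hμ, hμ]
  refine ⟨_, H.freeExt, hcard, H.hasExtensionProperty_freeExt,
    ⟨_, id, hcard, fun _ _ => H.freeExt.ne_of_adj⟩, ?_, ?_⟩
  · rintro ⟨C, c, hC, hc⟩
    exact (SimpleGraph.isEmpty_coloring_nestingGraph hμ hC).false
      ((SimpleGraph.Coloring.mk c fun h => hc _ _ h).comap H.toFreeExt)
  · rintro ⟨S, hS, hS₁⟩
    have hcount : S.Countable := SimpleGraph.IsClique.countable_of_freeExt
      (fun s hs => hs.finite_of_nestingGraph.countable) hS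
    exact aleph0_lt_aleph_one.not_ge (hS₁ ▸ le_aleph0_iff_set_countable.2 hcount)
end

section
/- The complete first-order theory of the shift graph Sh_2(ℕ), viewed as a structure in the language of graphs, is unstable: there exists a first-order formula φ(x̄, ȳ) in the language of graphs (with x̄, ȳ finite tuples of variables) such that for every k < ω there are tuples ā_0,…,ā_{k−1}, b̄_0,…,b̄_{k−1} of vertices of Sh_2(ℕ) with Sh_2(ℕ) ⊨ φ(ā_i, b̄_j) if and only if i < j. -/
/-!
The formula "`x` and `y` have a common neighbour" already has the order property. In `Sh_2`
the neighbours of `(0, m)` are exactly the pairs `(m, p)`, and when `N ≠ m` such a pair is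
adjacent to `(n, N)` only if it is `(m, n)`. Hence, for `i, j < k`, the vertices `(0, i + 1)`
and `(j + 1, k + 1)` have a common neighbour iff `i < j`.
-/

open Cardinal

/-- `t` is the shift of `s`: `s_i = t_{i-1}` for all `1 ≤ i ≤ r-1`. -/
def IsShiftOf {A : Type} {r : ℕ} (s t : Fin r → A) : Prop :=
  ∀ (i : ℕ) (h : i + 1 < r), s ⟨i + 1, h⟩ = t ⟨i, Nat.lt_of_succ_lt h⟩

/-- The shift graph `Sh_r(A)` on a linear order `A`: vertices are strictly increasing
`r`-tuples from `A`, and distinct vertices `s, t` are adjacent iff one is the shift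
of the other. -/
def ShiftGraph (A : Type) [LinearOrder A] (r : ℕ) :
    SimpleGraph {s : Fin r → A // StrictMono s} where
  Adj s t := s ≠ t ∧ (IsShiftOf s.1 t.1 ∨ IsShiftOf t.1 s.1)
  symm := by
    constructor
    rintro s t ⟨hne, h⟩
    exact ⟨hne.symm, h.symm⟩
  loopless := by
    constructor
    rintro s ⟨hne, -⟩
    exact hne rfl

/-- The symmetric shift graph `Sh_r^sym(A)` on a set `A`: vertices are `r`-tuples of
pairwise distinct elements of `A`, and distinct vertices `s, t` are adjacent iff one
is the shift of the other. -/
def SymShiftGraph (A : Type) (r : ℕ) :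
    SimpleGraph {s : Fin r → A // Function.Injective s} where
  Adj s t := s ≠ t ∧ (IsShiftOf s.1 t.1 ∨ IsShiftOf t.1 s.1)
  symm := by
    constructor
    rintro s t ⟨hne, h⟩
    exact ⟨hne.symm, h.symm⟩
  loopless := by
    constructor
    rintro s ⟨hne, -⟩
    exact hne rfl

open FirstOrder FirstOrder.Language

namespace FirstOrder.Language.graph

def commonNeighborFormula {α : Type*} (x y : α) : Language.graph.Formula α :=
  ∃' (adj.boundedFormula₂ (var (Sum.inl x)) &0 ⊓ adj.boundedFormula₂ &0 (var (Sum.inl y)))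

theorem realize_commonNeighborFormula {α V : Type*} (G : SimpleGraph V) (x y : α) (v : α → V) :
    @Formula.Realize _ _ G.structure _ (commonNeighborFormula x y) v ↔
      ∃ z, G.Adj (v x) z ∧ G.Adj z (v y) := by
  let := G.structure
  simp only [commonNeighborFormula, Formula.Realize, BoundedFormula.realize_ex,
    BoundedFormula.realize_inf, BoundedFormula.realize_rel₂, Term.realize_var, Sum.elim_inl,
    Fin.snoc_zero]
  rfl

end FirstOrder.Language.graph

theorem isShiftOf_two_iff {A : Type} {s t : Fin 2 → A} : IsShiftOf s t ↔ s 1 = t 0 :=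
  ⟨fun h => h 0 one_lt_two, fun h i hi => by
    obtain rfl : i = 0 := by omega
    exact h⟩

namespace ShiftGraph

variable {A : Type} [LinearOrder A]

theorem adj_two_iff {s t : {s : Fin 2 → A // StrictMono s}} :
    (ShiftGraph A 2).Adj s t ↔ s ≠ t ∧ (s.1 1 = t.1 0 ∨ t.1 1 = s.1 0) := by
  simp only [ShiftGraph, isShiftOf_two_iff]

def pair (a b : A) (h : a < b) : {s : Fin 2 → A // StrictMono s} :=
  ⟨![a, b], strictMono_vecCons.2 ⟨h, strictMono_vecEmpty⟩⟩

theorem pair_ne_pair_of_fst_ne {a b c d : A} {hab : a < b} {hcd : c < d} (h : a ≠ c) :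
    pair a b hab ≠ pair c d hcd :=
  fun he => h (congrFun (congrArg Subtype.val he) 0)

theorem exists_adj_adj_iff [OrderBot A] {m n N : A} (hm : ⊥ < m) (hn : n < N) (hmN : m ≠ N) :
    (∃ z, (ShiftGraph A 2).Adj (pair ⊥ m hm) z ∧ (ShiftGraph A 2).Adj z (pair n N hn)) ↔
      m < n := by
  simp only [adj_two_iff]
  constructor
  · rintro ⟨z, ⟨-, hzm | hz⟩, -, hzn | hzN⟩
    · simp only [pair, Matrix.cons_val_one, Matrix.cons_val_zero] at hzm hzn
      rw [hzm, ← hzn]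
      exact z.2 zero_lt_one
    · exact absurd (hzN.trans hzm.symm) (Ne.symm hmN)
    · exact absurd hz (z.2 zero_lt_one).ne_bot
    · exact absurd hz (z.2 zero_lt_one).ne_bot
  · intro hmn
    exact ⟨pair m n hmn, ⟨pair_ne_pair_of_fst_ne hm.ne, Or.inl rfl⟩,
      ⟨pair_ne_pair_of_fst_ne hmn.ne, Or.inl rfl⟩⟩

end ShiftGraph

theorem stmt_9 :
    ∃ (p q : ℕ) (φ : Language.graph.Formula (Fin p ⊕ Fin q)),
      ∀ k : ℕ,
        ∃ (a : Fin k → Fin p → {s : Fin 2 → ℕ // StrictMono s})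
          (b : Fin k → Fin q → {s : Fin 2 → ℕ // StrictMono s}),
          ∀ i j : Fin k,
            (@Formula.Realize Language.graph {s : Fin 2 → ℕ // StrictMono s}
              (ShiftGraph ℕ 2).structure _ φ (Sum.elim (a i) (b j))) ↔ i < j := by
  refine ⟨1, 1, graph.commonNeighborFormula (Sum.inl 0) (Sum.inr 0), fun k => ?_⟩
  refine ⟨fun i _ => ShiftGraph.pair ⊥ (i + 1) (Nat.succ_pos i),
    fun j _ => ShiftGraph.pair (j + 1) (k + 1) (by omega), fun i j => ?_⟩
  rw [graph.realize_commonNeighborFormula, Sum.elim_inl, Sum.elim_inr,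
    ShiftGraph.exists_adj_adj_iff _ _ (by omega), Fin.lt_def]
  omega
end

section
/- Let k ≥ 1 and let λ be an infinite cardinal. Then: (a) there exists a simple graph H, elementarily equivalent (in the language of graphs) to the shift graph Sh_k(ℕ), with vertex set of cardinality ℶ_{k−1}(λ)⁺ and with no proper coloring with colors in a set of cardinality at most λ; and (b) every simple graph H elementarily equivalent to Sh_k(ℕ) with vertex set of cardinality at most ℶ_{k−1}(λ) admits a proper coloring with colors in a set of cardinality at most λ. -/
open Cardinal

open FirstOrder FirstOrder.Language

/-- Iterated beth: `iterBeth μ 0 = μ` and `iterBeth μ (k+1) = 2 ^ iterBeth μ k`. -/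
def iterBeth (μ : Cardinal) : ℕ → Cardinal
  | 0 => μ
  | k + 1 => 2 ^ iterBeth μ k

/-!
Lower bound (Erdős–Hajnal): a colouring `c` of `Sh_{k+1}(A)` by `C` induces the colouring
`u ↦ {c (β :: u) | β < u₀}` of `Sh_k(A)` by `Set C`, so `#A ≤ ℶ_{k-1}(#C)`. Upper bound, for the
symmetric shift graph: embed `X` into the subsets of a well-order `Y` of size `ℶ_{k-1}(λ)` and
colour an injective `(k+1)`-tuple of sets `x` by the tuple `d` of points where consecutive entries
first differ, together with the table of memberships `dⱼ ∈ xᵢ`. For shift-adjacent tuples of the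
same colour this table is shift-invariant, which forces `d` to be injective; so `d` is a vertex of
the symmetric shift graph on `Y`, coloured by induction.

For (b), every finite subgraph of a graph `H ≡ Sh_k(ℕ)` maps into `Sh_k(ℕ)`, so an ultraproduct
gives a homomorphism of `H` into a symmetric shift graph on at most `#H · k` points. For (a), every
finite subgraph of `Sh_k(ℶ_{k-1}(λ)⁺ ×ₗ ℕ)` embeds into `Sh_k(ℕ)`, so the whole graph embeds into an
ultrapower of `Sh_k(ℕ)`, which Löwenheim–Skolem cuts down to size `ℶ_{k-1}(λ)⁺` around the image.
-/

open scoped symmDiff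

theorem le_iterBeth (μ : Cardinal) (n : ℕ) : μ ≤ iterBeth μ n := by
  induction n with
  | zero => exact le_rfl
  | succ n ih => exact ih.trans (cantor _).le

theorem iterBeth_mono {μ ν : Cardinal} (h : μ ≤ ν) (n : ℕ) : iterBeth μ n ≤ iterBeth ν n := by
  induction n with
  | zero => exact h
  | succ n ih => exact power_le_power_left two_ne_zero ih

theorem iterBeth_two_pow (μ : Cardinal) (n : ℕ) : iterBeth (2 ^ μ) n = iterBeth μ (n + 1) := by
  induction n with
  | zero => rfl
  | succ n ih => exact congrArg (2 ^ ·) ih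

theorem mk_prod_option_le {F C : Type} [Finite F] {κ : Cardinal} (hκ : ℵ₀ ≤ κ) (hC : #C ≤ κ) :
    #(F × Option C) ≤ κ := by
  rw [mk_prod, lift_id, lift_id, mk_option]
  calc #F * (#C + 1) ≤ κ * (κ + κ) :=
        mul_le_mul' ((lt_aleph0_of_finite F).le.trans hκ) (add_le_add hC (one_le_aleph0.trans hκ))
    _ = κ := by rw [add_eq_self hκ, mul_eq_self hκ]

theorem IsShiftOf.comp {A B : Type} {r : ℕ} {s t : Fin r → A} (h : IsShiftOf s t) (f : A → B) :
    IsShiftOf (f ∘ s) (f ∘ t) :=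
  fun i hi => congrArg f (h i hi)

theorem isShiftOf_comp_iff {A B : Type} {r : ℕ} {s t : Fin r → A} {f : A → B}
    (hf : Function.Injective f) : IsShiftOf (f ∘ s) (f ∘ t) ↔ IsShiftOf s t :=
  ⟨fun h i hi => hf (h i hi), fun h => h.comp f⟩

theorem IsShiftOf.vecCons {A : Type} {n : ℕ} {u v : Fin (n + 1) → A} (h : IsShiftOf u v) (β : A) :
    IsShiftOf (Matrix.vecCons β u) (Matrix.vecCons (u 0) v) := by
  rintro (_ | i) hi
  · rfl
  · exact h i (by omega)

namespace ShiftGraph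

def toSymShiftGraph (A : Type) [LinearOrder A] (r : ℕ) :
    ShiftGraph A r →g SymShiftGraph A r where
  toFun s := ⟨s.1, s.2.injective⟩
  map_rel' h := ⟨fun e => h.1 (Subtype.ext (Subtype.mk.inj e)), h.2⟩

def embedding {A B : Type} [LinearOrder A] [LinearOrder B] (e : A ↪o B) (r : ℕ) :
    ShiftGraph A r ↪g ShiftGraph B r where
  toFun s := ⟨e ∘ s.1, e.strictMono.comp s.2⟩
  inj' s t h := Subtype.ext (e.injective.comp_left (congrArg Subtype.val h))
  map_rel_iff' {s t} := by
    have hinj : (⟨e ∘ s.1, e.strictMono.comp s.2⟩ : {s : Fin r → B // StrictMono s}) =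
        ⟨e ∘ t.1, e.strictMono.comp t.2⟩ ↔ s = t := by
      rw [Subtype.mk.injEq, e.injective.comp_left.eq_iff, Subtype.ext_iff]
    exact and_congr (not_congr hinj)
      (or_congr (isShiftOf_comp_iff e.injective) (isShiftOf_comp_iff e.injective))

open Classical in
theorem nonempty_induce_embedding_nat {A : Type} [LinearOrder A] {r : ℕ}
    (S : Finset {s : Fin r → A // StrictMono s}) :
    Nonempty ((ShiftGraph A r).induce (S : Set _) ↪g ShiftGraph ℕ r) := by
  let A₀ : Finset A := S.biUnion fun s => Finset.univ.image s.1
  have mem (s : S) (i : Fin r) : s.1.1 i ∈ A₀ :=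
    Finset.mem_biUnion.2 ⟨s, s.2, Finset.mem_image_of_mem _ (Finset.mem_univ i)⟩
  let incl := embedding (OrderEmbedding.subtype (· ∈ A₀)) r
  let restrict (s : S) : {s : Fin r → A₀ // StrictMono s} := ⟨fun i => ⟨s.1.1 i, mem s i⟩, s.1.2⟩
  have incl_restrict (s : S) : incl (restrict s) = s.1 := rfl
  let toA₀ : (ShiftGraph A r).induce (S : Set _) ↪g ShiftGraph A₀ r :=
    ⟨⟨restrict, fun s t h => Subtype.ext (by rw [← incl_restrict, h, incl_restrict])⟩,
      fun {s t} => by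
        rw [← incl.map_adj_iff]
        rfl⟩
  obtain ⟨toNat⟩ := nonempty_orderEmbedding_of_finite_infinite A₀ ℕ
  exact ⟨(embedding toNat r).comp toA₀⟩

theorem mk_vertices_lex_nat {B : Type} [LinearOrder B] (hB : ℵ₀ ≤ #B) (n : ℕ) :
    #{s : Fin (n + 1) → B ×ₗ ℕ // StrictMono s} = #B := by
  refine le_antisymm ?_ ?_
  · calc #{s : Fin (n + 1) → B ×ₗ ℕ // StrictMono s} ≤ #(Fin (n + 1) → B × ℕ) := mk_subtype_le _
      _ = #B := by
        rw [mk_arrow, mk_prod, mk_nat, lift_id, lift_id, lift_aleph0, mk_fin, lift_natCast,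
          mul_aleph0_eq hB]
        exact_mod_cast power_nat_eq hB n.succ_pos
  · refine mk_le_of_injective (f := fun b => ⟨fun i => toLex (b, (i : ℕ)), fun i j h =>
      Prod.Lex.toLex_strictMono (Prod.mk_lt_mk_iff_right.2 h)⟩) fun a b h => ?_
    simpa using congrFun (congrArg Subtype.val h) 0

variable {A : Type} [LinearOrder A] {n : ℕ} {C : Type}

theorem adj_isShiftOf_lt_or {u v : {s : Fin (n + 1) → A // StrictMono s}}
    (h : (ShiftGraph A (n + 1)).Adj u v) :
    (IsShiftOf u.1 v.1 ∧ u.1 0 < v.1 0) ∨ (IsShiftOf v.1 u.1 ∧ v.1 0 < u.1 0) := by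
  obtain ⟨hne, hsh⟩ := h
  rcases n with _ | n
  · have hne₀ : u.1 0 ≠ v.1 0 := fun h₀ =>
      hne (Subtype.ext (funext fun i => by rw [Fin.fin_one_eq_zero i]; exact h₀))
    have vacuous : ∀ s t : Fin 1 → A, IsShiftOf s t := fun _ _ i hi => by omega
    rcases hne₀.lt_or_gt with h | h
    exacts [.inl ⟨vacuous _ _, h⟩, .inr ⟨vacuous _ _, h⟩]
  · have head_lt {s t : {s : Fin (n + 2) → A // StrictMono s}} (h : IsShiftOf s.1 t.1) :
        s.1 0 < t.1 0 :=
      (h 0 (by omega)).symm ▸ s.2 (Fin.mk_lt_mk.2 zero_lt_one)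
    rcases hsh with h | h
    exacts [.inl ⟨h, head_lt h⟩, .inr ⟨h, head_lt h⟩]

theorem coloring_vecCons_ne (c : (ShiftGraph A (n + 2)).Coloring C)
    {u v : {s : Fin (n + 1) → A // StrictMono s}} (hsh : IsShiftOf u.1 v.1) (hlt : u.1 0 < v.1 0)
    (β : Set.Iio (u.1 0)) :
    c ⟨Matrix.vecCons β.1 u.1, u.2.vecCons β.2⟩ ≠ c ⟨Matrix.vecCons (u.1 0) v.1, v.2.vecCons hlt⟩ :=
  c.valid ⟨fun h => β.2.ne (congrFun (congrArg Subtype.val h) 0), .inl (hsh.vecCons β)⟩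

def extensionColoring (c : (ShiftGraph A (n + 2)).Coloring C) :
    (ShiftGraph A (n + 1)).Coloring (Set C) :=
  .mk (fun u => Set.range fun β : Set.Iio (u.1 0) => c ⟨Matrix.vecCons β.1 u.1, u.2.vecCons β.2⟩)
    fun h heq => by
      rcases adj_isShiftOf_lt_or h with ⟨hsh, hlt⟩ | ⟨hsh, hlt⟩
      · obtain ⟨β, hβ⟩ := heq.ge ⟨⟨_, hlt⟩, rfl⟩
        exact coloring_vecCons_ne c hsh hlt β hβ
      · obtain ⟨β, hβ⟩ := heq.le ⟨⟨_, hlt⟩, rfl⟩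
        exact coloring_vecCons_ne c hsh hlt β hβ

theorem card_le_iterBeth (c : (ShiftGraph A (n + 1)).Coloring C) : #A ≤ iterBeth #C n := by
  induction n generalizing C with
  | zero =>
    refine mk_le_of_injective (f := fun a => c ⟨![a], strictMono_vecEmpty⟩) fun a b hab => ?_
    by_contra hne
    refine c.valid ⟨fun h => hne ?_, .inl fun i hi => by omega⟩ hab
    exact congrFun (congrArg Subtype.val h) 0
  | succ n ih =>
    calc #A ≤ iterBeth #(Set C) n := ih (extensionColoring c)
      _ = iterBeth #C (n + 1) := by rw [mk_set, iterBeth_two_pow]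

end ShiftGraph

section FirstDiff

variable {Y : Type} [LinearOrder Y] [WellFoundedLT Y] [Nonempty Y]

open Classical in
noncomputable def firstDiff (A B : Set Y) : Y :=
  if h : (A ∆ B).Nonempty then wellFounded_lt.min _ h else Classical.arbitrary Y

theorem not_firstDiff_mem_iff {A B : Set Y} (h : A ≠ B) :
    ¬ (firstDiff A B ∈ A ↔ firstDiff A B ∈ B) := by
  have hne := Set.symmDiff_nonempty.2 h
  have := wellFounded_lt.min_mem _ hne
  rw [firstDiff, dif_pos hne]
  rw [Set.mem_symmDiff] at this
  tauto

theorem mem_iff_mem_of_lt_firstDiff {A B : Set Y} {z : Y} (hz : z < firstDiff A B) :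
    z ∈ A ↔ z ∈ B := by
  by_contra h
  have hz' : z ∈ A ∆ B := by rw [Set.mem_symmDiff]; tauto
  rw [firstDiff, dif_pos ⟨z, hz'⟩] at hz
  exact wellFounded_lt.not_lt_min _ hz' hz

noncomputable def firstDiffSeq (S : ℕ → Set Y) (j : ℕ) : Y := firstDiff (S j) (S (j + 1))

theorem mem_iff_mem_of_forall_lt_firstDiffSeq {S : ℕ → Set Y} {z : Y} {a b : ℕ} (hab : a ≤ b)
    (h : ∀ i, a ≤ i → i < b → z < firstDiffSeq S i) : z ∈ S a ↔ z ∈ S b := by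
  induction b, hab using Nat.le_induction with
  | base => rfl
  | succ b hab ih =>
    exact (ih fun i hai hib => h i hai (by omega)).trans
      (mem_iff_mem_of_lt_firstDiff (h b hab (by omega)))

theorem injOn_firstDiffSeq {S : ℕ → Set Y} {n : ℕ} (hS : ∀ i < n, S i ≠ S (i + 1))
    (hshift : ∀ i j, i < n → j + 1 < n →
      (firstDiffSeq S j ∈ S i ↔ firstDiffSeq S (j + 1) ∈ S (i + 1))) :
    Set.InjOn (firstDiffSeq S) (Set.Iio n) := by
  set d := firstDiffSeq S
  have diag : ∀ m i j, i + m ≤ n → j + m < n → (d j ∈ S i ↔ d (j + m) ∈ S (i + m)) := by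
    intro m
    induction m with
    | zero => intros; rfl
    | succ m ih =>
      intro i j hi hj
      rw [ih i j (by omega) (by omega)]
      exact hshift _ _ (by omega) (by omega)
  suffices ∀ g a b, b - a = g → a < b → b < n → d a ≠ d b by
    intro a ha b hb hab
    by_contra hne
    rcases lt_or_gt_of_ne hne with h | h
    · exact this _ a b rfl h hb hab
    · exact this _ b a rfl h ha hab.symm
  intro g
  induction g using Nat.strong_induction_on with
  | _ g ih =>
  intro a b hg hab hb hd
  -- `d a = d b` is a repetition of minimal gap; `d r` is the least value of `d` on `[a, b)`
  obtain ⟨r, hr, hmin⟩ := (Finset.Ico a b).exists_min_image d ⟨a, by simp [hab]⟩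
  rw [Finset.mem_Ico] at hr
  have hlt : ∀ i, a ≤ i → i < b → i ≠ r → d r < d i := by
    refine fun i hai hib hir => (hmin i (by simp [hai, hib])).lt_of_ne fun h => ?_
    rcases lt_or_gt_of_ne hir with h' | h'
    · exact ih (r - i) (by omega) i r rfl h' (by omega) h.symm
    · exact ih (i - r) (by omega) r i rfl h' (by omega) h
  have before : d r ∈ S a ↔ d r ∈ S r :=
    mem_iff_mem_of_forall_lt_firstDiffSeq hr.1 fun i h₁ h₂ => hlt i h₁ (by omega) (by omega)
  have after : d r ∈ S (r + 1) ↔ d r ∈ S b :=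
    mem_iff_mem_of_forall_lt_firstDiffSeq (by omega) fun i h₁ h₂ => hlt i (by omega) h₂ (by omega)
  -- slide along diagonals of the table `d j ∈ S i`, indexed `(i, j)`:
  -- `(a, r) ~ (a + b - r, b) = (a + b - r, a) ~ (b, r)`
  have around : d r ∈ S a ↔ d r ∈ S b := by
    have h₁ := diag (b - r) a r (by omega) (by omega)
    have h₂ := diag (r - a) (a + (b - r)) a (by omega) (by omega)
    rw [show r + (b - r) = b by omega, ← hd] at h₁
    rw [show a + (r - a) = r by omega, show a + (b - r) + (r - a) = b by omega] at h₂
    exact h₁.trans h₂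
  exact not_firstDiff_mem_iff (hS r (by omega)) (before.symm.trans (around.trans after.symm))

end FirstDiff

namespace SymShiftGraph

def map {X Z : Type} {r : ℕ} (f : X ↪ Z) : SymShiftGraph X r →g SymShiftGraph Z r where
  toFun s := ⟨f ∘ s.1, f.injective.comp s.2⟩
  map_rel' h := ⟨fun hst => h.1 (Subtype.ext (f.injective.comp_left
    (congrArg Subtype.val hst))), h.2.imp (fun h => h.comp ⇑f) (fun h => h.comp ⇑f)⟩

def tupleSeq {Y : Type} {m : ℕ} (s : Fin m → Set Y) (i : ℕ) : Set Y :=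
  if h : i < m then s ⟨i, h⟩ else ∅

theorem tupleSeq_of_lt {Y : Type} {m : ℕ} (s : Fin m → Set Y) {i : ℕ} (h : i < m) :
    tupleSeq s i = s ⟨i, h⟩ := dif_pos h

variable {Y : Type} [LinearOrder Y] [WellFoundedLT Y] [Nonempty Y] {n : ℕ} {C : Type}

open Classical in
noncomputable def firstDiffColor (c : (SymShiftGraph Y (n + 1)).Coloring C)
    (x : {s : Fin (n + 2) → Set Y // Function.Injective s}) :
    (Fin (n + 2) → Fin (n + 1) → Prop) × Option C :=
  (fun i j => firstDiffSeq (tupleSeq x.1) j ∈ tupleSeq x.1 i,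
    if h : Function.Injective fun j : Fin (n + 1) => firstDiffSeq (tupleSeq x.1) j
    then some (c ⟨_, h⟩) else none)

theorem firstDiffColor_ne (c : (SymShiftGraph Y (n + 1)).Coloring C)
    {x y : {s : Fin (n + 2) → Set Y // Function.Injective s}} (hsh : IsShiftOf x.1 y.1) :
    firstDiffColor c x ≠ firstDiffColor c y := by
  intro h
  simp only [firstDiffColor, Prod.mk.injEq] at h
  obtain ⟨hM, hO⟩ := h
  set S := tupleSeq x.1
  set T := tupleSeq y.1
  have hmem : ∀ i j, i < n + 2 → j < n + 1 →
      (firstDiffSeq S j ∈ S i ↔ firstDiffSeq T j ∈ T i) :=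
    fun i j hi hj => iff_of_eq (congrFun (congrFun hM ⟨i, hi⟩) ⟨j, hj⟩)
  have hT : ∀ i < n + 1, T i = S (i + 1) := fun i hi => by
    show tupleSeq y.1 i = tupleSeq x.1 (i + 1)
    rw [tupleSeq_of_lt _ (by omega), tupleSeq_of_lt _ (by omega), hsh i (by omega)]
  have hdT : ∀ j < n, firstDiffSeq T j = firstDiffSeq S (j + 1) := fun j hj => by
    rw [firstDiffSeq, firstDiffSeq, hT j (by omega), hT (j + 1) (by omega)]
  have hS : ∀ i < n + 1, S i ≠ S (i + 1) := fun i hi => by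
    show tupleSeq x.1 i ≠ tupleSeq x.1 (i + 1)
    rw [tupleSeq_of_lt _ (by omega), tupleSeq_of_lt _ (by omega)]
    exact x.2.ne (by simp [Fin.ext_iff])
  have hinj := injOn_firstDiffSeq hS fun i j hi hj => by
    rw [hmem i j (by omega) (by omega), hdT j (by omega), hT i hi]
  have hx : Function.Injective fun j : Fin (n + 1) => firstDiffSeq S j :=
    fun a b hab => Fin.ext (hinj a.2 b.2 hab)
  rw [dif_pos hx] at hO
  split_ifs at hO with hy
  -- the two first-difference tuples are shift-related, and they differ since `firstDiffSeq S 0`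
  -- separates `S 0` from `S 1 = T 0`
  by_cases hxy :
      (fun j : Fin (n + 1) => firstDiffSeq S j) = fun j : Fin (n + 1) => firstDiffSeq T j
  · have h₀ := hmem 0 0 (by omega) (by omega)
    have e : firstDiffSeq S 0 = firstDiffSeq T 0 := congrFun hxy 0
    rw [← e, hT 0 (by omega)] at h₀
    exact not_firstDiff_mem_iff (hS 0 (by omega)) h₀
  · refine c.valid ⟨fun h => hxy (congrArg Subtype.val h), .inl fun j hj => ?_⟩ (Option.some.inj hO)
    exact (hdT j (by omega)).symm

noncomputable def firstDiffColoring (c : (SymShiftGraph Y (n + 1)).Coloring C) :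
    (SymShiftGraph (Set Y) (n + 2)).Coloring ((Fin (n + 2) → Fin (n + 1) → Prop) × Option C) :=
  .mk (firstDiffColor c) fun {x y} h => by
    rcases h.2 with hsh | hsh
    exacts [firstDiffColor_ne c hsh, (firstDiffColor_ne c hsh).symm]

theorem exists_coloring {κ : Cardinal} (hκ : ℵ₀ ≤ κ) : ∀ (n : ℕ) {X : Type},
    #X ≤ iterBeth κ n → ∃ C : Type, #C ≤ κ ∧ Nonempty ((SymShiftGraph X (n + 1)).Coloring C)
  | 0, X, hX => ⟨X, hX, ⟨.mk (fun s => s.1 0) fun h heq =>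
      h.1 (Subtype.ext (funext fun i => by rw [Fin.fin_one_eq_zero i]; exact heq))⟩⟩
  | n + 1, X, hX => by
    set μ := iterBeth κ n
    have hY : #μ.ord.ToType = μ := by rw [mk_toType, card_ord]
    have : Nonempty μ.ord.ToType := by
      rw [← mk_ne_zero_iff, hY]
      exact (aleph0_pos.trans_le (hκ.trans (le_iterBeth κ n))).ne'
    obtain ⟨C, hC, ⟨c⟩⟩ := exists_coloring hκ n hY.le
    obtain ⟨ι⟩ : Nonempty (X ↪ Set μ.ord.ToType) := by rw [← le_def, mk_set, hY]; exact hX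
    exact ⟨_, mk_prod_option_le hκ hC, ⟨(firstDiffColoring c).comp (map ι)⟩⟩

end SymShiftGraph

noncomputable def fineUltrafilter (α : Type) : Ultrafilter (Finset α) := .of Filter.atTop

theorem eventually_mem_fineUltrafilter {α : Type} (a : α) :
    ∀ᶠ S in (fineUltrafilter α : Filter (Finset α)), a ∈ S :=
  Ultrafilter.of_le _ ((Filter.eventually_ge_atTop {a}).mono fun _ hS =>
    hS (Finset.mem_singleton_self a))

theorem exists_induce_hom_of_elementarilyEquivalent {W V : Type} {H : SimpleGraph W}
    {G : SimpleGraph V}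
    (hEE : @ElementarilyEquivalent Language.graph W V H.structure G.structure)
    (s : Set W) [Finite s] : Nonempty (H.induce s →g G) := by
  let _ := H.structure
  let _ := G.structure
  let φ : Language.graph.Sentence := Formula.iExs s <| Formula.iInf
    fun pq : {pq : s × s // H.Adj pq.1 pq.2} =>
      adj.formula₂ (Term.var (Sum.inr pq.1.1)) (Term.var (Sum.inr pq.1.2))
  have hW : W ⊨ φ := by
    simp only [φ, Sentence.Realize, Formula.realize_iExs, Formula.realize_iInf,
      Formula.realize_rel₂]
    exact ⟨Subtype.val, fun pq => pq.2⟩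
  have hV := (hEE.realize_sentence φ).1 hW
  simp only [φ, Sentence.Realize, Formula.realize_iExs, Formula.realize_iInf,
    Formula.realize_rel₂] at hV
  obtain ⟨y, hy⟩ := hV
  exact ⟨⟨y, fun {p q} h => hy ⟨(p, q), h⟩⟩⟩

open Filter Classical in
theorem exists_hom_symShiftGraph_of_finite {W N : Type} [Nonempty N] {H : SimpleGraph W} {k : ℕ}
    (hfin : ∀ S : Finset W, Nonempty (H.induce (S : Set W) →g SymShiftGraph N k)) :
    ∃ X : Type, Nonempty (H →g SymShiftGraph X k) := by
  let U := fineUltrafilter W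
  let piece (S : Finset W) (w : W) : Fin k → N :=
    if h : w ∈ S then ((hfin S).some ⟨w, h⟩).1 else fun _ => Classical.arbitrary N
  have piece_inj (w : W) : ∀ᶠ S in ↑U, Function.Injective (piece S w) :=
    (eventually_mem_fineUltrafilter w).mono fun S h => by
      simp only [piece, dif_pos h]
      exact Subtype.prop _
  have piece_adj {u v : W} (huv : H.Adj u v) : ∀ᶠ S in ↑U, piece S u ≠ piece S v ∧
      (IsShiftOf (piece S u) (piece S v) ∨ IsShiftOf (piece S v) (piece S u)) :=
    ((eventually_mem_fineUltrafilter u).and (eventually_mem_fineUltrafilter v)).mono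
      fun S ⟨hu, hv⟩ => by
        have := (hfin S).some.map_rel (show (H.induce (S : Set W)).Adj ⟨u, hu⟩ ⟨v, hv⟩ from huv)
        simp only [piece, dif_pos hu, dif_pos hv]
        exact ⟨fun h => this.1 (Subtype.ext h), this.2⟩
  let tuple (w : W) (i : Fin k) : Germ (U : Filter (Finset W)) N := ↑fun S => piece S w i
  have tuple_shift {u v : W} (h : ∀ᶠ S in ↑U, IsShiftOf (piece S u) (piece S v)) :
      IsShiftOf (tuple u) (tuple v) := fun i hi =>
    Germ.coe_eq.2 (h.mono fun S hS => hS i hi)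
  refine ⟨Germ (U : Filter (Finset W)) N,
    ⟨⟨fun w => ⟨tuple w, fun i j hij => ?_⟩, fun {u v} huv => ⟨fun h => ?_, ?_⟩⟩⟩⟩
  · obtain ⟨S, hS, hij⟩ := ((piece_inj w).and (Germ.coe_eq.1 hij)).exists
    exact hS hij
  · have : ∀ᶠ S in ↑U, piece S u = piece S v :=
      (eventually_all.2 fun i => Germ.coe_eq.1 (congrFun (congrArg Subtype.val h) i)).mono
        fun S hS => funext hS
    obtain ⟨S, hne, heq⟩ := ((piece_adj huv).and this).exists
    exact hne.1 heq
  · rcases Ultrafilter.eventually_or.1 ((piece_adj huv).mono fun S h => h.2) with h | h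
    exacts [.inl (tuple_shift h), .inr (tuple_shift h)]

theorem exists_hom_symShiftGraph_card_le {W X : Type} {H : SimpleGraph W} {k : ℕ}
    (f : H →g SymShiftGraph X k) :
    ∃ X' : Type, #X' ≤ #W * k ∧ Nonempty (H →g SymShiftGraph X' k) := by
  let entry (p : W × Fin k) : X := (f p.1).1 p.2
  refine ⟨Set.range entry, ?_, ⟨fun w => ⟨fun i => ⟨entry (w, i), (w, i), rfl⟩,
    fun i j h => (f w).2 (congrArg Subtype.val h)⟩, fun {u v} huv => ?_⟩⟩
  · exact mk_range_le.trans (by simp)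
  · obtain ⟨hne, hsh⟩ := f.map_rel huv
    refine ⟨fun h => hne (Subtype.ext (funext fun i => ?_)), hsh.imp ?_ ?_⟩
    · exact congrArg Subtype.val (congrFun (congrArg Subtype.val h) i)
    all_goals exact fun h i hi => Subtype.ext (h i hi)

theorem exists_elementarilyEquivalent_card_eq_hom {V V' P : Type} [Language.graph.Structure P]
    {G : SimpleGraph V} {G' : SimpleGraph V'}
    (hP : @ElementarilyEquivalent Language.graph P V' _ G'.structure) (hV : ℵ₀ ≤ #V) {f : V → P}
    (hf : Function.Injective f) (hadj : ∀ {u v}, G.Adj u v → Structure.RelMap adj ![f u, f v]) :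
    ∃ (W : Type) (H : SimpleGraph W),
      @ElementarilyEquivalent Language.graph W V' H.structure G'.structure ∧ #W = #V ∧
        Nonempty (G →g H) := by
  let _ := G'.structure
  have hL : Language.graph.card ≤ #V := by
    refine le_trans ?_ hV
    rw [Language.card]
    exact mk_le_aleph0
  obtain ⟨S, hS, hcard⟩ := exists_elementarySubstructure_card_eq Language.graph (Set.range f) #V hV
    (by simpa using mk_range_le) (by simpa using hL) (by simpa using mk_le_of_injective hf)
  have hSV' : S ≅[Language.graph] V' := S.elementarilyEquivalent.trans hP
  have : S ⊨ Theory.simpleGraph := hSV'.symm.theory_model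
  refine ⟨S, simpleGraphOfStructure S, ?_, by simpa using hcard,
    ⟨⟨fun v => ⟨f v, hS ⟨v, rfl⟩⟩, fun {u v} h => ?_⟩⟩⟩
  · rw [structure_simpleGraphOfStructure]
    exact hSV'
  · refine (S.subtype.toEmbedding.map_rel adj _).1 ?_
    convert hadj h using 2
    ext i
    fin_cases i <;> rfl

open Filter Classical in
theorem exists_elementarilyEquivalent_card_eq_hom_of_finite_embedding {V V' : Type}
    [Nonempty V'] {G : SimpleGraph V} {G' : SimpleGraph V'} (hV : ℵ₀ ≤ #V)
    (hfin : ∀ S : Finset V, Nonempty (G.induce (S : Set V) ↪g G')) :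
    ∃ (W : Type) (H : SimpleGraph W),
      @ElementarilyEquivalent Language.graph W V' H.structure G'.structure ∧ #W = #V ∧
        Nonempty (G →g H) := by
  let U := fineUltrafilter V
  let piece (S : Finset V) (v : V) : V' :=
    if h : v ∈ S then (hfin S).some ⟨v, h⟩ else Classical.arbitrary V'
  let _ : Language.graph.Structure V' := G'.structure
  let f (v : V) : (U : Filter (Finset V)).Product fun _ => V' := ↑fun S => piece S v
  refine exists_elementarilyEquivalent_card_eq_hom (elementarilyEquivalent_iff.2 fun φ =>
    (Ultraproduct.sentence_realize φ).trans eventually_const) hV (f := f) (fun u v h => ?_)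
    fun {u v} h => ?_
  · obtain ⟨S, ⟨hu, hv⟩, hS⟩ := (((eventually_mem_fineUltrafilter u).and
      (eventually_mem_fineUltrafilter v)).and (Quotient.exact h)).exists
    simpa [piece, hu, hv] using hS
  · have := (Ultraproduct.realize_formula_cast (u := U) (adj.formula₂ (Term.var 0) (Term.var 1))
      ![fun S => piece S u, fun S => piece S v]).2 <| ((eventually_mem_fineUltrafilter u).and
        (eventually_mem_fineUltrafilter v)).mono fun S ⟨hu, hv⟩ => by
          simp only [Formula.realize_rel₂]
          show G'.Adj (piece S u) (piece S v)
          simp only [piece, dif_pos hu, dif_pos hv]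
          exact (hfin S).some.map_adj_iff.2 h
    simp only [Formula.realize_rel₂] at this
    exact this

theorem exists_coloring_of_elementarilyEquivalent_shiftGraph {κ : Cardinal} (hκ : ℵ₀ ≤ κ)
    {n : ℕ} {W : Type} {H : SimpleGraph W}
    (hEE : @ElementarilyEquivalent Language.graph W {s : Fin (n + 1) → ℕ // StrictMono s}
      H.structure (ShiftGraph ℕ (n + 1)).structure)
    (hW : #W ≤ iterBeth κ n) : ∃ C : Type, #C ≤ κ ∧ Nonempty (H.Coloring C) := by
  obtain ⟨X, ⟨f⟩⟩ := exists_hom_symShiftGraph_of_finite (H := H) fun S =>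
    (exists_induce_hom_of_elementarilyEquivalent hEE (S : Set W)).map
      (ShiftGraph.toSymShiftGraph ℕ (n + 1)).comp
  obtain ⟨X', hX', ⟨f'⟩⟩ := exists_hom_symShiftGraph_card_le f
  have hμ : ℵ₀ ≤ iterBeth κ n := hκ.trans (le_iterBeth κ n)
  have hX'le : #X' ≤ iterBeth κ n := hX'.trans <| (mul_le_mul' hW
    (natCast_lt_aleph0.le.trans hμ)).trans (mul_eq_self hμ).le
  obtain ⟨C, hC, ⟨c⟩⟩ := SymShiftGraph.exists_coloring hκ n hX'le
  exact ⟨C, hC, ⟨c.comp f'⟩⟩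

theorem exists_elementarilyEquivalent_shiftGraph_isEmpty_coloring {κ : Cardinal} (hκ : ℵ₀ ≤ κ)
    (n : ℕ) : ∃ (W : Type) (H : SimpleGraph W),
      @ElementarilyEquivalent Language.graph W {s : Fin (n + 1) → ℕ // StrictMono s}
        H.structure (ShiftGraph ℕ (n + 1)).structure ∧
      #W = Order.succ (iterBeth κ n) ∧ ∀ C : Type, #C ≤ κ → IsEmpty (H.Coloring C) := by
  set μ := Order.succ (iterBeth κ n)
  have hμ : ℵ₀ ≤ μ := (hκ.trans (le_iterBeth κ n)).trans (Order.le_succ _)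
  have hB : #μ.ord.ToType = μ := by rw [mk_toType, card_ord]
  have hV := ShiftGraph.mk_vertices_lex_nat (hB.symm ▸ hμ) n
  have : Nonempty {s : Fin (n + 1) → ℕ // StrictMono s} := ⟨⟨Fin.val, Fin.val_strictMono⟩⟩
  obtain ⟨W, H, hEE, hW, ⟨f⟩⟩ := exists_elementarilyEquivalent_card_eq_hom_of_finite_embedding
    (G' := ShiftGraph ℕ (n + 1)) (hV ▸ hB ▸ hμ) ShiftGraph.nonempty_induce_embedding_nat
  refine ⟨W, H, hEE, hW.trans (hV.trans hB), fun C hC => ⟨fun c => ?_⟩⟩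
  have hA : #(μ.ord.ToType ×ₗ ℕ) ≤ iterBeth κ n :=
    (ShiftGraph.card_le_iterBeth (c.comp f)).trans (iterBeth_mono hC n)
  have hμA : μ ≤ #(μ.ord.ToType ×ₗ ℕ) :=
    hB.symm.le.trans <| mk_le_of_injective (f := fun b => toLex (b, 0)) fun a b h =>
      congrArg Prod.fst (toLex.injective h)
  exact (Order.lt_succ _).not_ge (hμA.trans hA)

theorem stmt_17 (k : ℕ) (hk : 1 ≤ k) (lam : Cardinal) (hlam : ℵ₀ ≤ lam) :
    -- (a) a model of `Th(Sh_k(ℕ))` of cardinality `ℶ_{k-1}(lam)⁺` with chromatic number `> lam`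
    (∃ (W : Type) (H : SimpleGraph W),
      (@ElementarilyEquivalent Language.graph W {s : Fin k → ℕ // StrictMono s}
        H.structure (ShiftGraph ℕ k).structure) ∧
      #W = Order.succ (iterBeth lam (k - 1)) ∧
      ¬ ∃ (C : Type) (c : W → C), #C ≤ lam ∧ ∀ x y : W, H.Adj x y → c x ≠ c y) ∧
    -- (b) every model of `Th(Sh_k(ℕ))` of cardinality `≤ ℶ_{k-1}(lam)` has chromatic number `≤ lam`
    (∀ (W : Type) (H : SimpleGraph W),
      (@ElementarilyEquivalent Language.graph W {s : Fin k → ℕ // StrictMono s}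
        H.structure (ShiftGraph ℕ k).structure) →
      #W ≤ iterBeth lam (k - 1) →
      ∃ (C : Type) (c : W → C), #C ≤ lam ∧ ∀ x y : W, H.Adj x y → c x ≠ c y) := by
  obtain ⟨n, rfl⟩ : ∃ n, k = n + 1 := ⟨k - 1, by omega⟩
  rw [Nat.add_sub_cancel]
  refine ⟨?_, fun W H hEE hW => ?_⟩
  · obtain ⟨W, H, hEE, hW, hcol⟩ := exists_elementarilyEquivalent_shiftGraph_isEmpty_coloring hlam n
    exact ⟨W, H, hEE, hW, fun ⟨C, c, hC, hc⟩ => (hcol C hC).false (.mk c fun h => hc _ _ h)⟩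
  · obtain ⟨C, hC, ⟨c⟩⟩ := exists_coloring_of_elementarilyEquivalent_shiftGraph hlam hEE hW
    exact ⟨C, c, hC, fun _ _ h => c.valid h⟩
end
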